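/- arXiv:1210.7908 — 2 statements merged into one kernel-verified Lean document; each statement's English description precedes it below -/
import Mathlib

section
/- There exists a constant λ₀ > 0 such that the following holds for every real λ with 0 < λ ≤ λ₀ (Lemma about powers): suppose G = ⟨X | R⟩ is a presentation satisfying the small-cancellation condition C'(λ), the group G is torsion-free, w is a reduced word whose image in G is not conjugate in G to the image of any word of strictly smaller length, and n is a positive integer. If a word v is a common initial segment of some relator r ∈ R and of the word wⁿ, then |v| < (1/2 + λ)·|r|. -/
/-- Words over the alphabet `X ∪ X⁻¹`: a letter is a pair `(x, b)`,
where `b = true` means `x` and `b = false` means `x⁻¹`. -/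
abbrev Word (X : Type) := List (X × Bool)

/-- The inverse of a letter. -/
def invLetter {X : Type} (a : X × Bool) : X × Bool := (a.1, !a.2)

/-- A word is reduced if it contains no adjacent pair of mutually inverse letters. -/
def Reduced {X : Type} (w : Word X) : Prop :=
  List.Chain' (fun a b => b ≠ invLetter a) w

/-- The formal inverse of a word: reverse the word and invert each letter. -/
def wordInv {X : Type} (w : Word X) : Word X :=
  (w.map invLetter).reverse

/-- The cyclic permutation of a word by `k` letters. -/
def cyclicPerm {X : Type} (w : Word X) (k : ℕ) : Word X :=
  w.drop k ++ w.take k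

/-- The concatenation of `n` copies of a word. -/
def wordPow {X : Type} (w : Word X) (n : ℕ) : Word X :=
  (List.replicate n w).flatten

/-- A set of words is symmetrised if it is closed under taking formal inverses
and cyclic permutations. -/
def Symmetrised {X : Type} (R : Set (Word X)) : Prop :=
  ∀ r ∈ R, wordInv r ∈ R ∧ ∀ k : ℕ, cyclicPerm r k ∈ R

/-- The `C'(λ)` small-cancellation condition (the metric piece condition): for any two
distinct relators `r₁, r₂ ∈ R`, every common initial segment `v` of `r₁` and `r₂`
has length `< λ·|r₁|`. -/
def SmallCancellation {X : Type} (R : Set (Word X)) (lam : ℝ) : Prop :=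
  ∀ r₁ ∈ R, ∀ r₂ ∈ R, r₁ ≠ r₂ →
    ∀ v : Word X, v <+: r₁ → v <+: r₂ → (v.length : ℝ) < lam * r₁.length

/-- A monoid is torsion-free if every non-identity element has infinite order
(the definition of `Monoid.IsTorsionFree` in the older Mathlib). -/
def Monoid.IsTorsionFree (G : Type*) [Monoid G] : Prop :=
  ∀ g : G, g ≠ 1 → ¬IsOfFinOrder g

/-!
Suppose `|v| > |r|/2`. If `v` is a prefix of `w`, write `r = v t` and `w = v s`: then `t⁻¹ s`
is a strictly shorter word representing the same element as `w`. Otherwise `w` is a prefix of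
`v`, hence of `r`, and the same argument gives `|w| ≤ |r|/2`. Removing the first `|w|` letters
of `v` leaves a common prefix of `r` and of its cyclic permutation by `|w|`, of length
`|v| - |w| ≥ λ|r|`, so by `C'(λ)` this permutation is `r` itself. Then `r = zᵏ` for the prefix
`z` of length `gcd(|w|, |r|) ≤ |w|`; torsion-freeness gives `z = 1` in `G`, and cutting `z` off
`w` again shortens `w`.
-/

section Words

variable {X : Type}

lemma wordPow_succ (u : Word X) (m : ℕ) : wordPow u (m + 1) = wordPow u m ++ u := by
  simp [wordPow, List.replicate_succ']

lemma wordPow_succ' (u : Word X) (m : ℕ) : wordPow u (m + 1) = u ++ wordPow u m := by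
  simp [wordPow, List.replicate_succ]

lemma wordPow_nil (m : ℕ) : wordPow ([] : Word X) m = [] := by
  simp [wordPow]

lemma prefix_wordPow (u : Word X) {m : ℕ} (hm : 0 < m) : u <+: wordPow u m := by
  obtain ⟨m, rfl⟩ := Nat.exists_eq_add_of_lt hm
  rw [zero_add, wordPow_succ']
  exact List.prefix_append _ _

lemma drop_prefix_wordPow {v u : Word X} {m : ℕ} (h : v <+: wordPow u m) :
    v.drop u.length <+: wordPow u m := by
  cases m with
  | zero => simp_all [wordPow]
  | succ m =>
    have h' := h.drop u.length
    rw [wordPow_succ', List.drop_left] at h'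
    exact h'.trans (wordPow_succ u m ▸ List.prefix_append _ _)

lemma length_wordInv (u : Word X) : (wordInv u).length = u.length := by
  simp [wordInv]

lemma mk_wordInv (u : Word X) : FreeGroup.mk (wordInv u) = (FreeGroup.mk u)⁻¹ := by
  rw [FreeGroup.inv_mk]
  rfl

lemma mk_wordPow (u : Word X) (m : ℕ) : FreeGroup.mk (wordPow u m) = FreeGroup.mk u ^ m := by
  induction m with
  | zero => simp [wordPow, ← FreeGroup.one_eq_mk]
  | succ m ih => rw [wordPow_succ', ← FreeGroup.mul_mk, ih, pow_succ']

lemma eq_wordPow_of_append_comm {u s : Word X} {m : ℕ} (hc : u ++ s = s ++ u)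
    (hs : s.length = m * u.length) : s = wordPow u m := by
  induction m generalizing s with
  | zero => simp_all [wordPow]
  | succ m ih =>
    obtain ⟨s', rfl⟩ : u <+: s :=
      List.prefix_of_prefix_length_le (hc ▸ List.prefix_append u s) (List.prefix_append s u)
        (by rw [hs, Nat.succ_mul]; omega)
    have hc' : u ++ s' = s' ++ u := by simpa using hc
    rw [wordPow_succ', ih hc' (by simp [Nat.succ_mul] at hs; omega)]

lemma eq_wordPow_of_rotate_eq_self {r : Word X} {d t : ℕ} (ht : r.length = t * d)
    (h : r.rotate d = r) : r = wordPow (r.take d) t := by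
  cases t with
  | zero => simp_all [wordPow]
  | succ t =>
    have hd : d ≤ r.length := by rw [ht, Nat.succ_mul]; omega
    have hc : r.take d ++ r.drop d = r.drop d ++ r.take d := by
      rw [List.take_append_drop, ← List.rotate_eq_drop_append_take hd, h]
    have hlen : (r.drop d).length = t * (r.take d).length := by
      rw [List.length_drop, List.length_take, min_eq_left hd, ht, Nat.succ_mul]
      omega
    calc r = r.take d ++ r.drop d := (List.take_append_drop d r).symm
      _ = wordPow (r.take d) (t + 1) := by rw [eq_wordPow_of_append_comm hc hlen, wordPow_succ']

end Words

lemma List.rotate_gcd_length_eq_self {α : Type*} {l : List α} {k : ℕ} (h : l.rotate k = l) :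
    l.rotate (k.gcd l.length) = l := by
  have iterate_eq (m : ℕ) : (fun l : List α => l.rotate 1)^[m] l = l.rotate m := by
    induction m with
    | zero => simp
    | succ m ih => rw [Function.iterate_succ_apply', ih, List.rotate_rotate]
  have hk : Function.IsPeriodicPt (fun l : List α => l.rotate 1) k l := (iterate_eq k).trans h
  have hn : Function.IsPeriodicPt (fun l : List α => l.rotate 1) l.length l :=
    (iterate_eq _).trans l.rotate_length
  exact (iterate_eq _).symm.trans (hk.gcd hn)

section Geodesic

variable {X : Type} {G : Type*} [Group G]

def IsGeodesic (φ : FreeGroup X →* G) (w : Word X) : Prop :=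
  ∀ u : Word X, u.length < w.length → φ (FreeGroup.mk u) ≠ φ (FreeGroup.mk w)

variable {φ : FreeGroup X →* G} {w r v : Word X}

lemma isGeodesic_of_not_isConj
    (h : ∀ u : Word X, u.length < w.length →
      ¬ IsConj (φ (FreeGroup.mk w)) (φ (FreeGroup.mk u))) : IsGeodesic φ w :=
  fun u hu heq => h u hu (heq ▸ IsConj.refl _)

namespace IsGeodesic

lemma two_mul_length_le_of_prefix (hw : IsGeodesic φ w) (hr : φ (FreeGroup.mk r) = 1)
    (hvr : v <+: r) (hvw : v <+: w) : 2 * v.length ≤ r.length := by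
  obtain ⟨t, rfl⟩ := hvr
  obtain ⟨s, rfl⟩ := hvw
  have hv : φ (FreeGroup.mk v) = (φ (FreeGroup.mk t))⁻¹ :=
    eq_inv_of_mul_eq_one_left (by rwa [← map_mul, FreeGroup.mul_mk])
  have hlen := not_lt.1 fun hlt => hw (wordInv t ++ s) hlt
    (by simp only [← FreeGroup.mul_mk, map_mul, mk_wordInv, map_inv, hv])
  simp only [List.length_append, length_wordInv] at hlen ⊢
  omega

lemma eq_nil_of_prefix_of_map_eq_one {z : Word X} (hw : IsGeodesic φ w) (hzw : z <+: w)
    (hz : φ (FreeGroup.mk z) = 1) : z = [] := by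
  obtain ⟨s, rfl⟩ := hzw
  by_contra hne
  refine hw s ?_ (by rw [← FreeGroup.mul_mk, map_mul, hz, one_mul])
  simp [List.length_pos_iff.2 hne]

lemma rotate_length_ne_self (htf : Monoid.IsTorsionFree G) (hw : IsGeodesic φ w)
    (hr : φ (FreeGroup.mk r) = 1) (hwr : w <+: r) (hw0 : w ≠ []) (hwlt : w.length < r.length) :
    r.rotate w.length ≠ r := by
  intro hrot
  set d := w.length.gcd r.length
  have hd0 : 0 < d := Nat.gcd_pos_of_pos_left _ (List.length_pos_iff.2 hw0)
  have hdw : d ≤ w.length := Nat.gcd_le_left _ (List.length_pos_iff.2 hw0)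
  obtain ⟨t, ht⟩ := Nat.gcd_dvd_right w.length r.length
  have hpow : r = wordPow (r.take d) t :=
    eq_wordPow_of_rotate_eq_self (ht.trans (mul_comm _ _)) (List.rotate_gcd_length_eq_self hrot)
  have ht0 : 0 < t := Nat.pos_of_ne_zero (by rintro rfl; rw [mul_zero] at ht; omega)
  have hroot : φ (FreeGroup.mk (r.take d)) = 1 := by
    by_contra hne
    refine htf _ hne (isOfFinOrder_iff_pow_eq_one.2 ⟨t, ht0, ?_⟩)
    rw [← map_pow, ← mk_wordPow, ← hpow, hr]
  have hprefix : r.take d <+: w := List.prefix_of_prefix_length_le (List.take_prefix d r) hwr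
    (by simp only [List.length_take]; omega)
  have := congrArg List.length (hw.eq_nil_of_prefix_of_map_eq_one hprefix hroot)
  simp only [List.length_take, List.length_nil] at this
  omega

end IsGeodesic

end Geodesic

/-- Lemma about powers: there is a constant `λ₀ > 0` such that for every `0 < λ ≤ λ₀` the
following holds. Suppose `G = ⟨X | R⟩` satisfies `C'(λ)`, `G` is torsion-free, `w` is a
reduced word whose image in `G` is not conjugate to the image of any strictly shorter word,
and `n` is a positive integer. If a word `v` is a common initial segment of a relator
`r ∈ R` and of `wⁿ`, then `|v| < (1/2 + λ)·|r|`. -/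
theorem lemma_about_powers :
    ∃ lam₀ : ℝ, 0 < lam₀ ∧ ∀ lam : ℝ, 0 < lam → lam ≤ lam₀ →
      ∀ (X : Type) (R : Set (Word X)),
        (∀ r ∈ R, Reduced r ∧ r ≠ []) →
        Symmetrised R →
        SmallCancellation R lam →
        Monoid.IsTorsionFree (PresentedGroup (FreeGroup.mk '' R)) →
        ∀ w : Word X, Reduced w →
          (∀ u : Word X, u.length < w.length →
            ¬ IsConj (PresentedGroup.mk (FreeGroup.mk '' R) (FreeGroup.mk w))
                     (PresentedGroup.mk (FreeGroup.mk '' R) (FreeGroup.mk u))) →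
          ∀ n : ℕ, 0 < n →
            ∀ r ∈ R, ∀ v : Word X, v <+: r → v <+: wordPow w n →
              (v.length : ℝ) < (1 / 2 + lam) * r.length := by
  refine ⟨1, one_pos, fun lam hlam _ X R hR hsym hsc htf w _ hmin n hn r hr v hvr hvw => ?_⟩
  by_contra! hlong
  have hgeo : IsGeodesic (PresentedGroup.mk (FreeGroup.mk '' R)) w :=
    isGeodesic_of_not_isConj hmin
  have hr1 := PresentedGroup.one_of_mem (Set.mem_image_of_mem FreeGroup.mk hr)
  have hrv : r.length < 2 * v.length := by
    have : (0 : ℝ) < r.length := by exact_mod_cast List.length_pos_iff.2 (hR r hr).2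
    exact_mod_cast (by nlinarith : (r.length : ℝ) < 2 * v.length)
  rcases List.prefix_or_prefix_of_prefix hvw (prefix_wordPow w hn) with hvw' | hwv
  · exact absurd (hgeo.two_mul_length_le_of_prefix hr1 hvr hvw') (by omega)
  have hwr := hwv.trans hvr
  have hwr2 := hgeo.two_mul_length_le_of_prefix hr1 hwr List.prefix_rfl
  have hw0 : w ≠ [] := by
    rintro rfl
    rw [wordPow_nil, List.prefix_nil] at hvw
    simp [hvw] at hrv
  have hwlt : w.length < r.length := by
    have := List.length_pos_iff.2 hw0
    omega
  have hdistinct : r ≠ cyclicPerm r w.length := by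
    rw [cyclicPerm, ← List.rotate_eq_drop_append_take hwr.length_le]
    exact (hgeo.rotate_length_ne_self htf hr1 hwr hw0 hwlt).symm
  have hpiece := hsc r hr _ ((hsym r hr).2 w.length) hdistinct (v.drop w.length)
    ((List.prefix_of_prefix_length_le (drop_prefix_wordPow hvw) hvw (by simp)).trans hvr)
    ((hvr.drop w.length).trans (List.prefix_append _ _))
  rw [List.length_drop, Nat.cast_sub hwv.length_le] at hpiece
  have hwr2' : (2 * w.length : ℝ) ≤ r.length := by exact_mod_cast hwr2
  nlinarith
end

section
/- In the free group F(a, b) on two generators, a nontrivial commutator cannot be a cube: for all elements x, y, w of F(a, b), if the commutator ⁅x, y⁆ equals w³, then ⁅x, y⁆ = 1. -/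
/-!
By Nielsen–Schreier we may replace the ambient free group by the free subgroup generated by `x`,
`y`, `w`. If its rank is at most one it is abelian. Otherwise pick distinct basis elements `i`, `j`.
As `w ^ 3` is a commutator, `w` vanishes in the torsion-free abelianization, so there `i` and `j`
are integer combinations of `x` and `y`, and the images of `x`, `y` in `ℤ²` have determinant `±1`.
Now send `i`, `j` to the standard generators of the integer Heisenberg group: the central
coordinate of `⁅x, y⁆` is that determinant, while that of a cube is divisible by `3`.
-/

open scoped commutatorElement

@[ext]
structure Heisenberg where
  a : ℤ
  b : ℤ
  c : ℤ

namespace Heisenberg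

instance : One Heisenberg := ⟨⟨0, 0, 0⟩⟩

-- `⟨a, b, c⟩` is the unitriangular matrix `!![1, a, c; 0, 1, b; 0, 0, 1]`.
instance : Mul Heisenberg := ⟨fun g h => ⟨g.a + h.a, g.b + h.b, g.c + h.c + g.a * h.b⟩⟩

instance : Inv Heisenberg := ⟨fun g => ⟨-g.a, -g.b, -g.c + g.a * g.b⟩⟩

@[simp] lemma one_a : (1 : Heisenberg).a = 0 := rfl
@[simp] lemma one_b : (1 : Heisenberg).b = 0 := rfl
@[simp] lemma one_c : (1 : Heisenberg).c = 0 := rfl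
@[simp] lemma mul_a (g h : Heisenberg) : (g * h).a = g.a + h.a := rfl
@[simp] lemma mul_b (g h : Heisenberg) : (g * h).b = g.b + h.b := rfl
@[simp] lemma mul_c (g h : Heisenberg) : (g * h).c = g.c + h.c + g.a * h.b := rfl
@[simp] lemma inv_a (g : Heisenberg) : g⁻¹.a = -g.a := rfl
@[simp] lemma inv_b (g : Heisenberg) : g⁻¹.b = -g.b := rfl
@[simp] lemma inv_c (g : Heisenberg) : g⁻¹.c = -g.c + g.a * g.b := rfl

instance : Group Heisenberg where
  mul_assoc g h k := by ext <;> simp <;> ring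
  one_mul g := by ext <;> simp
  mul_one g := by ext <;> simp
  inv_mul_cancel g := by ext <;> simp

lemma commutatorElement_c (g h : Heisenberg) : ⁅g, h⁆.c = g.a * h.b - g.b * h.a := by
  simp [commutatorElement_def]
  ring

lemma pow_three_c (g : Heisenberg) : (g ^ 3).c = 3 * (g.c + g.a * g.b) := by
  simp [pow_succ]
  ring

lemma three_dvd_of_commutatorElement_eq_pow_three {g h k : Heisenberg} (hk : ⁅g, h⁆ = k ^ 3) :
    3 ∣ g.a * h.b - g.b * h.a :=
  ⟨k.c + k.a * k.b, by rw [← commutatorElement_c, ← pow_three_c, hk]⟩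

def toProd : Heisenberg →* Multiplicative (ℤ × ℤ) where
  toFun g := .ofAdd (g.a, g.b)
  map_one' := rfl
  map_mul' _ _ := rfl

end Heisenberg

lemma isUnit_det_of_mem_closure_pair {u v : Multiplicative (ℤ × ℤ)}
    (h₁ : .ofAdd (1, 0) ∈ Subgroup.closure {u, v}) (h₂ : .ofAdd (0, 1) ∈ Subgroup.closure {u, v}) :
    IsUnit (u.toAdd.1 * v.toAdd.2 - u.toAdd.2 * v.toAdd.1) := by
  obtain ⟨m, n, hmn⟩ := Subgroup.mem_closure_pair.mp h₁
  obtain ⟨m', n', hmn'⟩ := Subgroup.mem_closure_pair.mp h₂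
  have e := congrArg Multiplicative.toAdd hmn
  have e' := congrArg Multiplicative.toAdd hmn'
  simp only [toAdd_mul, toAdd_zpow, toAdd_ofAdd, Prod.ext_iff, Prod.fst_add, Prod.snd_add,
    Prod.smul_fst, Prod.smul_snd, smul_eq_mul] at e e'
  -- `!![m, n; m', n']` is a left inverse of the matrix with rows `u`, `v`.
  refine IsUnit.of_mul_eq_one (m * n' - n * m') ?_
  linear_combination (m * u.toAdd.1 + n * v.toAdd.1) * e'.2 + e.1 -
    (m' * u.toAdd.1 + n' * v.toAdd.1) * e.2

lemma map_eq_one_of_commutatorElement_eq_pow {G A : Type*} [Group G] [CommGroup A]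
    [IsMulTorsionFree A] (φ : G →* A) {x y w : G} {n : ℕ} (hn : n ≠ 0) (h : ⁅x, y⁆ = w ^ n) :
    φ w = 1 :=
  pow_left_injective hn <| by
    simp only [← map_pow, ← h, map_commutatorElement, commutatorElement_eq_one_iff_commute,
      Commute.all, one_pow]

lemma FreeGroup.commute_of_subsingleton {α : Type*} [Subsingleton α] (u v : FreeGroup α) :
    Commute u v := by
  induction u with
  | C1 => exact Commute.one_left v
  | of i =>
    induction v with
    | C1 => exact Commute.one_right _
    | of j => rw [Subsingleton.elim i j]
    | inv_of j hj => exact hj.inv_right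
    | mul u v hu hv => exact hu.mul_right hv
  | inv_of i hi => exact hi.inv_left
  | mul u v hu hv => exact hu.mul_left hv

namespace IsFreeGroup

variable {G : Type*} [Group G] [IsFreeGroup G]

lemma commute_of_subsingleton [Subsingleton (Generators G)] (x y : G) : Commute x y := by
  simpa using (FreeGroup.commute_of_subsingleton (toFreeGroup G x) (toFreeGroup G y)).map
    (toFreeGroup G).symm

lemma closure_ne_top_of_commutatorElement_eq_pow_three [Nontrivial (Generators G)] {x y w : G}
    (h : ⁅x, y⁆ = w ^ 3) : Subgroup.closure {x, y, w} ≠ ⊤ := by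
  classical
  intro hgen
  obtain ⟨i, j, hij⟩ := exists_pair_ne (Generators G)
  let f : G →* Heisenberg := lift fun k => ⟨if k = i then 1 else 0, if k = j then 1 else 0, 0⟩
  let ψ := Heisenberg.toProd.comp f
  have hψw : ψ w = 1 := map_eq_one_of_commutatorElement_eq_pow ψ three_ne_zero h
  have hψ : ∀ g, ψ g ∈ Subgroup.closure {ψ x, ψ y} := by
    intro g
    have hg : ψ g ∈ (Subgroup.closure {x, y, w}).map ψ := ⟨g, hgen ▸ trivial, rfl⟩
    rwa [MonoidHom.map_closure, Set.image_insert_eq, Set.image_insert_eq, Set.image_singleton,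
      hψw, Set.pair_comm (ψ y), Set.insert_comm, Subgroup.closure_insert_one] at hg
  have hunit : IsUnit ((f x).a * (f y).b - (f x).b * (f y).a) := by
    refine isUnit_det_of_mem_closure_pair (u := ψ x) (v := ψ y) ?_ ?_
    · simpa [ψ, f, Heisenberg.toProd, lift_of, hij] using hψ (of i)
    · simpa [ψ, f, Heisenberg.toProd, lift_of, hij.symm] using hψ (of j)
  have h3 := Heisenberg.three_dvd_of_commutatorElement_eq_pow_three
    (by rw [← map_commutatorElement, ← map_pow, h] : ⁅f x, f y⁆ = f w ^ 3)
  have := isUnit_of_dvd_unit h3 hunit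
  norm_num [Int.isUnit_iff] at this

theorem commutatorElement_eq_one_of_eq_pow_three {x y w : G} (h : ⁅x, y⁆ = w ^ 3) :
    ⁅x, y⁆ = 1 := by
  let H := Subgroup.closure {x, y, w}
  let x' : H := ⟨x, Subgroup.subset_closure (by simp)⟩
  let y' : H := ⟨y, Subgroup.subset_closure (by simp)⟩
  let w' : H := ⟨w, Subgroup.subset_closure (by simp)⟩
  have hgen : Subgroup.closure {x', y', w'} = ⊤ := by
    convert Subgroup.closure_preimage_eq_top ({x, y, w} : Set G)
    ext ⟨g, _⟩
    simp [x', y', w']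
  have h' : ⁅x', y'⁆ = w' ^ 3 := Subtype.ext h
  suffices ⁅x', y'⁆ = 1 from congrArg Subtype.val this
  cases subsingleton_or_nontrivial (Generators H)
  · exact commutatorElement_eq_one_iff_commute.mpr (commute_of_subsingleton x' y')
  · exact absurd hgen (closure_ne_top_of_commutatorElement_eq_pow_three h')

end IsFreeGroup

/-- In the free group on two generators, a nontrivial commutator cannot be a cube. -/
theorem commutator_not_cube_in_free_group (x y w : FreeGroup (Fin 2)) :
    ⁅x, y⁆ = w ^ 3 → ⁅x, y⁆ = 1 :=
  IsFreeGroup.commutatorElement_eq_one_of_eq_pow_three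
end
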